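/- Under the assumptions below, f(t) > 0 for every real t with λₙ < t < 1, and the function t ↦ log(1 − f(t)^{1/N}) is integrable on the interval (λₙ, 1) (the integrand having at worst a logarithmic singularity at t = 1). -/

import Mathlib

open MeasureTheory Real Set Polynomial

/-!
On `(λₙ, 1)` the polynomial `f` has no zeros and `f 1 > 0`, so `f > 0` there by the
intermediate value theorem. Since `1 - f` is a polynomial, `log (1 - f)` has only logarithmic
singularities and is integrable on bounded intervals. Writing `y = f ^ (1/N) ∈ [0, 1)`,
Bernoulli's inequality gives `1 - f = 1 - y ^ N ≤ N (1 - y)`, so `|log (1 - y)| ≤ |log (1 - f)| + log N`.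
-/

theorem analyticAt_of_ofReal_eq_eval {f : ℝ → ℝ} {p : ℂ[X]}
    (hf : ∀ t : ℝ, (f t : ℂ) = p.eval (t : ℂ)) (x : ℝ) : AnalyticAt ℝ f x := by
  have hre : f = fun t : ℝ => (aeval (t : ℂ) p).re := funext fun t => by
    rw [coe_aeval_eq_eval, ← hf, Complex.ofReal_re]
  rw [hre]
  exact Complex.reCLM.analyticAt _ |>.comp (Complex.ofRealCLM.analyticAt x |>.aeval_polynomial p)

theorem abs_log_one_sub_le_abs_log_one_sub_pow_add_log {y : ℝ} {N : ℕ} (hN : 0 < N)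
    (hy0 : 0 ≤ y) (hy1 : y < 1) : |log (1 - y)| ≤ |log (1 - y ^ N)| + log N := by
  have hyN : y ^ N < 1 := pow_lt_one₀ hy0 hy1 hN.ne'
  have hyN0 : 0 ≤ y ^ N := pow_nonneg hy0 N
  have hbernoulli : 1 - y ^ N ≤ N * (1 - y) := by
    have := one_add_mul_le_pow (a := y - 1) (by linarith) N
    rw [add_sub_cancel] at this
    linarith
  have hlog : log (1 - y ^ N) ≤ log N + log (1 - y) := by
    rw [← log_mul (by positivity) (by linarith)]
    exact log_le_log (by linarith) hbernoulli
  rw [abs_of_nonpos (log_nonpos (by linarith) (by linarith)),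
    abs_of_nonpos (log_nonpos (by linarith) (by linarith))]
  linarith

theorem Integrable.log_one_sub_rpow_inv {α : Type*} [MeasurableSpace α] {μ : Measure α}
    [IsFiniteMeasure μ] {g : α → ℝ} {N : ℕ} (hN : 0 < N) (hg : AEMeasurable g μ)
    (hg01 : ∀ᵐ x ∂μ, 0 ≤ g x ∧ g x < 1) (hint : Integrable (fun x => log (1 - g x)) μ) :
    Integrable (fun x => log (1 - g x ^ (N⁻¹ : ℝ))) μ := by
  refine (hint.abs.add (integrable_const (log N))).mono' ?_ ?_
  · exact ((aemeasurable_const.sub (hg.pow_const _)).log).aestronglyMeasurable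
  · filter_upwards [hg01] with x ⟨h0, h1⟩
    have hpow : (g x ^ (N⁻¹ : ℝ)) ^ N = g x := rpow_inv_natCast_pow h0 hN.ne'
    simpa [hpow] using abs_log_one_sub_le_abs_log_one_sub_pow_add_log hN
      (rpow_nonneg h0 _) (rpow_lt_one h0 h1 (inv_pos.mpr (Nat.cast_pos.mpr hN)))

theorem pos_of_continuousOn_Ioc_of_ne_zero {f : ℝ → ℝ} {a b : ℝ} (hf : ContinuousOn f (Ioc a b))
    (hne : ∀ t ∈ Ioo a b, f t ≠ 0) (hb : 0 < f b) {t : ℝ} (ht : t ∈ Ioo a b) : 0 < f t := by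
  by_contra! hle
  obtain ⟨s, hs, hfs⟩ := intermediate_value_Icc ht.2.le (hf.mono (Icc_subset_Ioc ht.1 le_rfl))
    (⟨hle, hb.le⟩ : (0 : ℝ) ∈ Icc (f t) (f b))
  have hsb : s ≠ b := by rintro rfl; exact hb.ne' hfs
  exact hne s ⟨ht.1.trans_le hs.1, hs.2.lt_of_ne hsb⟩ hfs

/-- Under the assumptions (\ref{thmassump}) of the paper, `f(t) > 0` for
`λₙ < t < 1`, and `t ↦ log(1 − f(t)^{1/N})` is integrable on `(λₙ, 1)`. -/
theorem stmt10 (N n : ℕ) (hN : 2 ≤ N) (hn : 1 ≤ n)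
    (lam : Fin n → ℂ)
    (f : ℝ → ℝ) (hf : ∀ t : ℝ, (f t : ℂ) = (t : ℂ) * ∏ i, ((t : ℂ) - lam i))
    (ln : ℝ) (hlam : lam ⟨n - 1, by omega⟩ = (ln : ℂ)) (hln0 : 0 < ln)
    (hother : ∀ i : Fin n, i ≠ ⟨n - 1, by omega⟩ →
      ∀ r : ℝ, lam i = (r : ℂ) → ¬(0 < r ∧ r < 1))
    (hbound : ∀ t : ℝ, 0 ≤ t → t < 1 → |f t| < 1) (hf1 : 0 < f 1) :
    (∀ t : ℝ, ln < t → t < 1 → 0 < f t) ∧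
    IntegrableOn (fun t : ℝ => Real.log (1 - (f t) ^ ((1 : ℝ) / (N : ℝ))))
      (Set.Ioo ln 1) := by
  have hfa : ∀ x, AnalyticAt ℝ f x := analyticAt_of_ofReal_eq_eval
    (p := X * ∏ i, (X - C (lam i))) fun t => by simp [hf, eval_prod]
  have hne : ∀ t ∈ Ioo ln 1, f t ≠ 0 := by
    rintro t ⟨hlt, ht1⟩ hft
    have hroot : (t : ℂ) = 0 ∨ ∃ i, (t : ℂ) - lam i = 0 := by
      simpa [hft, Finset.prod_eq_zero_iff] using (hf t).symm
    obtain ht0 | ⟨i, hi⟩ := hroot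
    · exact (hln0.trans hlt).ne' (Complex.ofReal_eq_zero.mp ht0)
    · rw [sub_eq_zero, eq_comm] at hi
      by_cases hlast : i = ⟨n - 1, by omega⟩
      · rw [hlast, hlam, Complex.ofReal_inj] at hi
        exact hlt.ne hi
      · exact hother i hlast t hi ⟨hln0.trans hlt, ht1⟩
  have hfc : Continuous f := continuous_iff_continuousAt.mpr fun x => (hfa x).continuousAt
  have hpos : ∀ t : ℝ, ln < t → t < 1 → 0 < f t := fun t h1 h2 =>
    pos_of_continuousOn_Ioc_of_ne_zero hfc.continuousOn hne hf1 ⟨h1, h2⟩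
  refine ⟨hpos, ?_⟩
  have hlog : IntegrableOn (fun t => log (1 - f t)) (Ioo ln 1) :=
    (AnalyticOnNhd.meromorphicOn fun x _ => analyticAt_const.sub (hfa x)).intervalIntegrable_log
      |>.def'.mono_set (Ioo_subset_Ioc_self.trans Ioc_subset_uIoc)
  have hf01 : ∀ᵐ t ∂volume.restrict (Ioo ln 1), 0 ≤ f t ∧ f t < 1 :=
    (ae_restrict_iff' measurableSet_Ioo).mpr <| .of_forall fun t ⟨h1, h2⟩ =>
      ⟨(hpos t h1 h2).le, (abs_lt.mp (hbound t (hln0.trans h1).le h2)).2⟩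
  simp only [one_div]
  exact Integrable.log_one_sub_rpow_inv (by omega) hfc.measurable.aemeasurable hf01 hlog
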